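/- arXiv:2111.04363 — 4 statements merged into one kernel-verified Lean document; each statement's English description precedes it below -/
import Mathlib

section
/- For any connected graphs G and H of orders n ≥ 3 and m ≥ 3, the restrained double Roman domination number of the strong product satisfies γ_rdR(G ⊠ H) ≤ 2nm − 2. -/
open SimpleGraph Finset

/-- A restrained double Roman dominating function. -/
def IsRDRD {α : Type*} (G : SimpleGraph α) (f : α → ℕ) : Prop :=
  (∀ v, f v ≤ 3) ∧
  (∀ v, f v = 0 →
    (∃ u, G.Adj v u ∧ f u = 3) ∨
    (∃ u w, u ≠ w ∧ G.Adj v u ∧ G.Adj v w ∧ f u = 2 ∧ f w = 2)) ∧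
  (∀ v, f v = 1 → ∃ u, G.Adj v u ∧ 2 ≤ f u) ∧
  (∀ v, f v = 0 → ∃ u, G.Adj v u ∧ f u = 0)

/-- The restrained double Roman domination number. -/
noncomputable def gammaRdR {α : Type*} (G : SimpleGraph α) [Fintype α] : ℕ :=
  sInf {w | ∃ f, IsRDRD G f ∧ ∑ v, f v = w}

/-- The strong product of two simple graphs. -/
def strongProd {α β : Type*} (G : SimpleGraph α) (H : SimpleGraph β) :
    SimpleGraph (α × β) where
  Adj p q := p ≠ q ∧ (G.Adj p.1 q.1 ∨ p.1 = q.1) ∧ (H.Adj p.2 q.2 ∨ p.2 = q.2)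
  symm := by
    constructor
    rintro p q ⟨h1, h2, h3⟩
    exact ⟨h1.symm, h2.imp (fun h => h.symm) Eq.symm, h3.imp (fun h => h.symm) Eq.symm⟩
  loopless := by constructor; rintro p ⟨h1, _⟩; exact h1 rfl

/-- The cardinal (direct/tensor) product of two simple graphs. -/
def cardProd {α β : Type*} (G : SimpleGraph α) (H : SimpleGraph β) :
    SimpleGraph (α × β) where
  Adj p q := G.Adj p.1 q.1 ∧ H.Adj p.2 q.2
  symm := by constructor; rintro p q ⟨h1, h2⟩; exact ⟨h1.symm, h2.symm⟩
  loopless := by constructor; rintro p ⟨h1, _⟩; exact G.irrefl h1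

/-- The corona of two simple graphs. -/
def corona {α β : Type*} (G : SimpleGraph α) (H : SimpleGraph β) :
    SimpleGraph (α ⊕ α × β) where
  Adj x y :=
    match x, y with
    | .inl u, .inl v => G.Adj u v
    | .inl u, .inr (v, _) => u = v
    | .inr (v, _), .inl u => u = v
    | .inr (u, a), .inr (v, b) => u = v ∧ H.Adj a b
  symm := by
    constructor
    rintro (u | ⟨u, a⟩) (v | ⟨v, b⟩) h
    · exact h.symm
    · exact h
    · exact h
    · exact ⟨h.1.symm, h.2.symm⟩
  loopless := by
    constructor
    rintro (u | ⟨u, a⟩) h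
    · exact G.irrefl h
    · exact H.irrefl h.2

/-!
Pick edges `a a'` of `G` and `b b'` of `H`. In `G ⊠ H` the adjacent vertices `(a, b)` and
`(a', b)` have the two common neighbours `(a, b')` and `(a', b')`, so assigning `0` to that
edge and `2` to every other vertex is a restrained double Roman dominating function, of
weight `2 (nm - 2) ≤ 2nm - 2`.
-/

section Pair

variable {V : Type*} [DecidableEq V]

def zeroOnPair (p q : V) (v : V) : ℕ := if v = p ∨ v = q then 0 else 2

lemma zeroOnPair_eq_zero_iff {p q v : V} : zeroOnPair p q v = 0 ↔ v = p ∨ v = q := by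
  unfold zeroOnPair; split_ifs <;> simp_all

lemma zeroOnPair_eq_two {p q v : V} (hp : v ≠ p) (hq : v ≠ q) : zeroOnPair p q v = 2 := by
  simp [zeroOnPair, hp, hq]

lemma isRDRD_zeroOnPair (K : SimpleGraph V) {p q r s : V} (hpq : K.Adj p q) (hrs : r ≠ s)
    (hpr : K.Adj p r) (hps : K.Adj p s) (hqr : K.Adj q r) (hqs : K.Adj q s) :
    IsRDRD K (zeroOnPair p q) := by
  refine ⟨fun v => ?_, fun v hv => ?_, fun v hv => ?_, fun v hv => ?_⟩
  · unfold zeroOnPair; split_ifs <;> omega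
  · right
    refine ⟨r, s, hrs, ?_, ?_, zeroOnPair_eq_two hpr.ne' hqr.ne',
      zeroOnPair_eq_two hps.ne' hqs.ne'⟩ <;>
      rcases zeroOnPair_eq_zero_iff.mp hv with rfl | rfl <;> assumption
  · unfold zeroOnPair at hv; split_ifs at hv; omega
  · rcases zeroOnPair_eq_zero_iff.mp hv with rfl | rfl
    · exact ⟨q, hpq, zeroOnPair_eq_zero_iff.mpr (Or.inr rfl)⟩
    · exact ⟨p, hpq.symm, zeroOnPair_eq_zero_iff.mpr (Or.inl rfl)⟩

lemma sum_zeroOnPair [Fintype V] {p q : V} (hpq : p ≠ q) :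
    ∑ v, zeroOnPair p q v = 2 * (Fintype.card V - 2) := by
  unfold zeroOnPair
  have hsupport : (univ.filter fun v => ¬(v = p ∨ v = q)) = univ \ {p, q} := by ext; simp
  rw [sum_ite, sum_const_zero, zero_add, sum_const, smul_eq_mul, hsupport,
    card_sdiff_of_subset (subset_univ _), card_pair hpq, card_univ, mul_comm]

lemma gammaRdR_le_of_adj_of_common_adj [Fintype V] (K : SimpleGraph V) {p q r s : V}
    (hpq : K.Adj p q) (hrs : r ≠ s) (hpr : K.Adj p r) (hps : K.Adj p s) (hqr : K.Adj q r)
    (hqs : K.Adj q s) : gammaRdR K ≤ 2 * (Fintype.card V - 2) :=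
  Nat.sInf_le ⟨_, isRDRD_zeroOnPair K hpq hrs hpr hps hqr hqs, sum_zeroOnPair hpq.ne⟩

end Pair

section StrongProd

variable {α β : Type*} {G : SimpleGraph α} {H : SimpleGraph β}

lemma strongProd_adj_of_adj_left {a a' : α} (ha : G.Adj a a') (b : β) :
    (strongProd G H).Adj (a, b) (a', b) :=
  ⟨by simp [ha.ne], Or.inl ha, Or.inr rfl⟩

lemma strongProd_adj_of_adj_right (a : α) {b b' : β} (hb : H.Adj b b') :
    (strongProd G H).Adj (a, b) (a, b') :=
  ⟨by simp [hb.ne], Or.inr rfl, Or.inl hb⟩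

lemma strongProd_adj_of_adj_of_adj {a a' : α} {b b' : β} (ha : G.Adj a a') (hb : H.Adj b b') :
    (strongProd G H).Adj (a, b) (a', b') :=
  ⟨by simp [ha.ne], Or.inl ha, Or.inl hb⟩

end StrongProd

theorem stmt0 {α β : Type*} [Fintype α] [Fintype β]
    (G : SimpleGraph α) (H : SimpleGraph β)
    (hG : G.Connected) (hH : H.Connected)
    (hn : 3 ≤ Fintype.card α) (hm : 3 ≤ Fintype.card β) :
    gammaRdR (strongProd G H) ≤ 2 * Fintype.card α * Fintype.card β - 2 := by
  classical
  have : Nontrivial α := Fintype.one_lt_card_iff_nontrivial.mp (by omega)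
  have : Nontrivial β := Fintype.one_lt_card_iff_nontrivial.mp (by omega)
  obtain ⟨a, a', ha⟩ : ∃ a a', G.Adj a a' :=
    ⟨Classical.arbitrary α, hG.preconnected.exists_adj_of_nontrivial _⟩
  obtain ⟨b, b', hb⟩ : ∃ b b', H.Adj b b' :=
    ⟨Classical.arbitrary β, hH.preconnected.exists_adj_of_nontrivial _⟩
  calc gammaRdR (strongProd G H) ≤ 2 * (Fintype.card (α × β) - 2) :=
        gammaRdR_le_of_adj_of_common_adj _ (strongProd_adj_of_adj_left ha b)
          (by simp [ha.ne]) (strongProd_adj_of_adj_right a hb)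
          (strongProd_adj_of_adj_of_adj ha hb) (strongProd_adj_of_adj_of_adj ha.symm hb)
          (strongProd_adj_of_adj_right a' hb)
    _ ≤ 2 * Fintype.card α * Fintype.card β - 2 := by
        rw [Fintype.card_prod, mul_assoc]; omega
end

section
/- Let f be a minimum-weight RDRD-function of P_n ⊠ P_m with n ∈ {2,3}, and let f_j denote the total weight of the j-th column. Then f_{j−1} + f_j + f_{j+1} ≥ 3 for all 1 ≤ j ≤ m−2, and f_0 + f_1 ≥ 3 and f_{m−2} + f_{m−1} ≥ 3. -/
/-!
Take the vertically adjacent cells `a = (0, j)` and `b = (1, j)`; their closed neighbourhoods lie in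
columns `j - 1, j, j + 1`. If `f a ≠ 2`, the conditions at `a` alone put weight `≥ 3` on `N[a]`:
a `0` needs a `3` or two `2`s around it, a `1` a neighbour of weight `≥ 2`. If `f a = 2`, either
`f b ≥ 1`, or `f b = 0` and the same argument applies at `b`.
-/

open SimpleGraph Finset

namespace IsRDRD

variable {α : Type*} {G : SimpleGraph α} {f : α → ℕ} {s : Finset α}

theorem three_le_sum_of_ne_two (hf : IsRDRD G f) {v : α} (hv : f v ≠ 2) (hvs : v ∈ s)
    (hs : ∀ u, G.Adj v u → u ∈ s) : 3 ≤ ∑ u ∈ s, f u := by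
  obtain ⟨hle, hzero, hone, -⟩ := hf
  have hnonneg : ∀ u ∈ s, 0 ≤ f u := fun _ _ => Nat.zero_le _
  have hle3 := hle v
  obtain h0 | h1 | h3 : f v = 0 ∨ f v = 1 ∨ f v = 3 := by omega
  · rcases hzero v h0 with ⟨u, hvu, hu⟩ | ⟨u, w, huw, hvu, hvw, hu, hw⟩
    · have := single_le_sum hnonneg (hs u hvu)
      omega
    · have := add_le_sum hnonneg (hs u hvu) (hs w hvw) huw
      omega
  · obtain ⟨u, hvu, hu⟩ := hone v h1
    have := add_le_sum hnonneg hvs (hs u hvu) hvu.ne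
    omega
  · have := single_le_sum hnonneg hvs
    omega

theorem three_le_sum_of_adj (hf : IsRDRD G f) {a b : α} (hab : G.Adj a b)
    (ha : ∀ u, G.Adj a u → u ∈ s) (hb : ∀ u, G.Adj b u → u ∈ s) : 3 ≤ ∑ u ∈ s, f u := by
  have has : a ∈ s := hb a hab.symm
  by_cases h2 : f a = 2
  · by_cases hb0 : f b = 0
    · exact hf.three_le_sum_of_ne_two (by omega) (ha b hab) hb
    · have := add_le_sum (fun u _ => Nat.zero_le (f u)) has (ha b hab) hab.ne
      omega
  · exact hf.three_le_sum_of_ne_two h2 has ha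

end IsRDRD

section StrongProductOfPaths

variable {n m : ℕ}

theorem strongProd_pathGraph_adj_snd {p q : Fin n × Fin m}
    (h : (strongProd (pathGraph n) (pathGraph m)).Adj p q) :
    (q.2 : ℕ) ≤ p.2 + 1 ∧ (p.2 : ℕ) ≤ q.2 + 1 := by
  obtain ⟨-, -, h | h⟩ := h
  · rw [pathGraph_adj] at h
    omega
  · rw [h]
    omega

theorem sum_filter_snd_mem_Ico_le {f : Fin n × Fin m → ℕ} {col : ℕ → ℕ}
    (hcol : ∀ j : Fin m, col j = ∑ i : Fin n, f (i, j)) (a b : ℕ) :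
    ∑ p ∈ univ.filter (fun p : Fin n × Fin m => (p.2 : ℕ) ∈ Ico a b), f p ≤
      ∑ k ∈ Ico a b, col k := by
  calc ∑ p ∈ univ.filter (fun p : Fin n × Fin m => (p.2 : ℕ) ∈ Ico a b), f p
      = ∑ j : Fin m, if (j : ℕ) ∈ Ico a b then col j else 0 := by
        rw [sum_filter, Fintype.sum_prod_type_right]
        refine sum_congr rfl fun j _ => ?_
        split_ifs <;> simp [hcol]
    _ = ∑ k ∈ range m ∩ Ico a b, col k := by
        rw [Fin.sum_univ_eq_sum_range (fun k => if k ∈ Ico a b then col k else 0), sum_ite_mem]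
    _ ≤ ∑ k ∈ Ico a b, col k := sum_le_sum_of_subset inter_subset_right

/-- With truncated `j - 1` and the cap `min (j + 2) m`, the hypotheses say exactly that `[a, b)`
contains those of the columns `j - 1, j, j + 1` that exist. -/
theorem IsRDRD.three_le_sum_Ico_col (hn : 2 ≤ n) {f : Fin n × Fin m → ℕ}
    (hf : IsRDRD (strongProd (pathGraph n) (pathGraph m)) f) {col : ℕ → ℕ}
    (hcol : ∀ j : Fin m, col j = ∑ i : Fin n, f (i, j)) (j a b : ℕ) (hj : j < m)
    (ha : a ≤ j - 1) (hb : min (j + 2) m ≤ b) : 3 ≤ ∑ k ∈ Ico a b, col k := by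
  let top : Fin n × Fin m := (⟨0, by omega⟩, ⟨j, hj⟩)
  let below : Fin n × Fin m := (⟨1, by omega⟩, ⟨j, hj⟩)
  have hadj : (strongProd (pathGraph n) (pathGraph m)).Adj top below :=
    ⟨by simp [top, below], Or.inl (by simp [pathGraph_adj, top, below]), Or.inr rfl⟩
  have hnbhd : ∀ v : Fin n × Fin m, (v.2 : ℕ) = j → ∀ u,
      (strongProd (pathGraph n) (pathGraph m)).Adj v u →
      u ∈ univ.filter (fun p : Fin n × Fin m => (p.2 : ℕ) ∈ Ico a b) := by
    intro v hv u hvu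
    have := strongProd_pathGraph_adj_snd hvu
    rw [hv] at this
    rw [min_le_iff] at hb
    simp only [mem_filter, mem_univ, true_and, mem_Ico]
    omega
  exact (hf.three_le_sum_of_adj hadj (hnbhd top rfl) (hnbhd below rfl)).trans
    (sum_filter_snd_mem_Ico_le hcol a b)

end StrongProductOfPaths

theorem stmt5_general (n m : ℕ) (hn : n = 2 ∨ n = 3) (hm : 2 ≤ m)
    (f : Fin n × Fin m → ℕ)
    (hf : IsRDRD (strongProd (SimpleGraph.pathGraph n) (SimpleGraph.pathGraph m)) f)
    (col : ℕ → ℕ)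
    (hcol : ∀ j : Fin m, col j = ∑ i : Fin n, f (i, j)) :
    (∀ j : ℕ, 1 ≤ j → j ≤ m - 2 → 3 ≤ col (j - 1) + col j + col (j + 1)) ∧
      3 ≤ col 0 + col 1 ∧ 3 ≤ col (m - 2) + col (m - 1) := by
  have hn2 : 2 ≤ n := by omega
  refine ⟨fun j hj1 hj2 => ?_, ?_, ?_⟩
  · obtain ⟨k, rfl⟩ : ∃ k, j = k + 1 := ⟨j - 1, by omega⟩
    have := hf.three_le_sum_Ico_col hn2 hcol (k + 1) k (k + 3) (by omega) (by omega) (by omega)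
    simpa [sum_Ico_eq_sum_range, sum_range_succ, add_assoc] using this
  · have := hf.three_le_sum_Ico_col hn2 hcol 0 0 2 (by omega) (by omega) (by omega)
    simpa [sum_Ico_eq_sum_range, sum_range_succ] using this
  · obtain ⟨k, rfl⟩ : ∃ k, m = k + 2 := ⟨m - 2, by omega⟩
    have := hf.three_le_sum_Ico_col hn2 hcol (k + 1) k (k + 2) (by omega) (by omega) (by omega)
    simpa [sum_Ico_eq_sum_range, sum_range_succ, add_assoc] using this

theorem stmt5 (n m : ℕ) (hn : n = 2 ∨ n = 3) (hm : 2 ≤ m)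
    (f : Fin n × Fin m → ℕ)
    (hf : IsRDRD (strongProd (SimpleGraph.pathGraph n) (SimpleGraph.pathGraph m)) f)
    (hmin : ∑ v, f v =
      gammaRdR (strongProd (SimpleGraph.pathGraph n) (SimpleGraph.pathGraph m)))
    (col : ℕ → ℕ)
    (hcol : ∀ j : Fin m, col j = ∑ i : Fin n, f (i, j)) :
    (∀ j : ℕ, 1 ≤ j → j ≤ m - 2 → 3 ≤ col (j - 1) + col j + col (j + 1)) ∧
      3 ≤ col 0 + col 1 ∧ 3 ≤ col (m - 2) + col (m - 1) :=
  stmt5_general n m hn hm f hf col hcol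
end

section
/- For m ≥ 3, γ_rdR(C₃ × C_m) = 2m. -/
open SimpleGraph Finset

/-!
Work with the column sums `s j = ∑ i, f (i, j)` of a double Roman dominating function `f`. The
neighbours of a cell lie in the two adjacent columns, so the cells of value `0` or `1` force: a
column of sum at most `5` has an adjacent column of sum at least `2`, and the adjacent columns of a
column of sum `0` (resp. `1`) have total sum at least `6` (resp. `5`). Now discharge: a column of
sum at least `3` sends one unit to each adjacent column of sum at most `1`, and a column of sum at
least `4` a second unit to each adjacent column of sum `0`. By the three constraints every column
ends with charge at least `2`, so `∑ f ≥ 2m`. Putting `2` on one row and `0` elsewhere is a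
restrained double Roman dominating function of weight `2m`.
-/

section DoubleRoman

variable {α : Type*}

def IsDoubleRomanDominating (G : SimpleGraph α) (f : α → ℕ) : Prop :=
  (∀ v, f v ≤ 3) ∧
  (∀ v, f v = 0 →
    (∃ u, G.Adj v u ∧ f u = 3) ∨
    (∃ u w, u ≠ w ∧ G.Adj v u ∧ G.Adj v w ∧ f u = 2 ∧ f w = 2)) ∧
  (∀ v, f v = 1 → ∃ u, G.Adj v u ∧ 2 ≤ f u)

variable {G : SimpleGraph α} {f : α → ℕ}

theorem IsRDRD.isDoubleRomanDominating (hf : IsRDRD G f) : IsDoubleRomanDominating G f :=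
  ⟨hf.1, hf.2.1, hf.2.2.1⟩

/-- Weighting a neighbour `u` by `f u - 1` (so `3 ↦ 2`, `2 ↦ 1`, `1, 0 ↦ 0`) turns the two
domination conditions into a single linear one. -/
theorem IsDoubleRomanDominating.two_sub_le_sum (hf : IsDoubleRomanDominating G f) {v : α}
    (hv : f v ≤ 1) {s : Finset α} (hs : ∀ u, G.Adj v u → u ∈ s) :
    2 - f v ≤ ∑ u ∈ s, (f u - 1) := by
  classical
  obtain ⟨-, hzero, hone⟩ := hf
  rcases Nat.le_one_iff_eq_zero_or_eq_one.1 hv with h0 | h1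
  · rcases hzero v h0 with ⟨u, hvu, hu⟩ | ⟨u, w, huw, hvu, hvw, hu, hw⟩
    · calc 2 - f v ≤ f u - 1 := by omega
        _ ≤ _ := single_le_sum (f := fun x => f x - 1) (fun _ _ => Nat.zero_le _) (hs u hvu)
    · calc 2 - f v ≤ ∑ x ∈ {u, w}, (f x - 1) := by rw [sum_pair huw]; omega
        _ ≤ _ := sum_le_sum_of_subset (insert_subset (hs u hvu) (singleton_subset_iff.2 (hs w hvw)))
  · obtain ⟨u, hvu, hu⟩ := hone v h1
    calc 2 - f v ≤ f u - 1 := by omega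
      _ ≤ _ := single_le_sum (f := fun x => f x - 1) (fun _ _ => Nat.zero_le _) (hs u hvu)

end DoubleRoman

theorem card_mul_le_sum_of_discharging {ι : Type*} [AddGroup ι] [Fintype ι] (d : ι)
    (s : ι → ℤ) (t : ι → ι → ℤ) (c : ℤ)
    (h : ∀ j, c ≤ s j + t (j - d) j + t (j + d) j - t j (j - d) - t j (j + d)) :
    Fintype.card ι * c ≤ ∑ j, s j := by
  have hright : ∑ j, t (j - d) j = ∑ j, t j (j + d) :=
    (Fintype.sum_equiv (Equiv.addRight d) _ _ fun j => by simp).symm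
  have hleft : ∑ j, t (j + d) j = ∑ j, t j (j - d) :=
    (Fintype.sum_equiv (Equiv.subRight d) _ _ fun j => by simp).symm
  calc (Fintype.card ι : ℤ) * c = ∑ _j : ι, c := by simp
    _ ≤ ∑ j, (s j + t (j - d) j + t (j + d) j - t j (j - d) - t j (j + d)) :=
      sum_le_sum fun j _ => h j
    _ = ∑ j, s j := by
      simp only [sum_add_distrib, sum_sub_distrib, hright, hleft]
      ring

theorem Fin.sub_one_ne_add_one {n : ℕ} (j : Fin (n + 3)) : j - 1 ≠ j + 1 := by
  rw [Ne, sub_eq_iff_eq_add, add_assoc, left_eq_add, Fin.ext_iff]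
  simp [Fin.val_add, Nat.mod_eq_of_lt (show 2 < n + 3 by omega)]

theorem cardProd_cycleGraph_adj {n : ℕ} {i k : Fin 3} {j l : Fin (n + 2)} :
    (cardProd (cycleGraph 3) (cycleGraph (n + 2))).Adj (i, j) (k, l) ↔
      i ≠ k ∧ (l = j - 1 ∨ l = j + 1) := by
  change (cycleGraph 3).Adj i k ∧ (cycleGraph (n + 2)).Adj j l ↔ _
  rw [cycleGraph_three_eq_top, top_adj, ← mem_neighborSet, cycleGraph_neighborSet]
  rfl

theorem column_constraints (a b c : Fin 3 → ℕ)
    (h : ∀ i, b i ≤ 1 → 2 - b i ≤ ∑ k ∈ univ.erase i, ((a k - 1) + (c k - 1))) :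
    (∑ i, b i ≤ 5 → 2 ≤ ∑ i, a i ∨ 2 ≤ ∑ i, c i) ∧
    (∑ i, b i = 0 → 6 ≤ ∑ i, a i + ∑ i, c i) ∧
    (∑ i, b i = 1 → 5 ≤ ∑ i, a i + ∑ i, c i) := by
  have herase (i : Fin 3) := add_sum_erase univ (fun k => (a k - 1) + (c k - 1)) (mem_univ i)
  have h0 := h 0; have h1 := h 1; have h2 := h 2
  have e0 := herase 0; have e1 := herase 1; have e2 := herase 2
  simp only [Fin.sum_univ_three] at e0 e1 e2 ⊢
  omega

def transfer (x y : ℕ) : ℤ :=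
  (if 3 ≤ x ∧ y ≤ 1 then 1 else 0) + (if 4 ≤ x ∧ y = 0 then 1 else 0)

theorem two_le_charge {x y z : ℕ} (hlow : y ≤ 5 → 2 ≤ x ∨ 2 ≤ z) (hzero : y = 0 → 6 ≤ x + z)
    (hone : y = 1 → 5 ≤ x + z) :
    2 ≤ (y : ℤ) + transfer x y + transfer z y - transfer y x - transfer y z := by
  unfold transfer
  split_ifs <;> omega

def colSum {β : Type*} (f : Fin 3 × β → ℕ) (j : β) : ℕ :=
  ∑ i, f (i, j)

section Torus

variable {n : ℕ} {f : Fin 3 × Fin (n + 3) → ℕ}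

theorem IsDoubleRomanDominating.two_sub_le_sum_adjacent_columns
    (hf : IsDoubleRomanDominating (cardProd (cycleGraph 3) (cycleGraph (n + 3))) f)
    (i : Fin 3) (j : Fin (n + 3)) (h : f (i, j) ≤ 1) :
    2 - f (i, j) ≤ ∑ k ∈ univ.erase i, ((f (k, j - 1) - 1) + (f (k, j + 1) - 1)) := by
  have hnbr : ∀ u, (cardProd (cycleGraph 3) (cycleGraph (n + 3))).Adj (i, j) u →
      u ∈ univ.erase i ×ˢ {j - 1, j + 1} := by
    rintro ⟨k, l⟩ hadj
    obtain ⟨hik, hl⟩ := cardProd_cycleGraph_adj.1 hadj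
    simpa [Ne.symm hik] using hl
  simpa [sum_product, sum_pair (Fin.sub_one_ne_add_one j)] using hf.two_sub_le_sum h hnbr

theorem IsDoubleRomanDominating.two_mul_le_sum
    (hf : IsDoubleRomanDominating (cardProd (cycleGraph 3) (cycleGraph (n + 3))) f) :
    2 * (n + 3) ≤ ∑ v, f v := by
  have hcharge (j : Fin (n + 3)) : (2 : ℤ) ≤ colSum f j +
      transfer (colSum f (j - 1)) (colSum f j) + transfer (colSum f (j + 1)) (colSum f j) -
      transfer (colSum f j) (colSum f (j - 1)) - transfer (colSum f j) (colSum f (j + 1)) := by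
    obtain ⟨hlow, hzero, hone⟩ := column_constraints (fun k => f (k, j - 1)) (fun k => f (k, j))
      (fun k => f (k, j + 1)) fun i => hf.two_sub_le_sum_adjacent_columns i j
    exact two_le_charge hlow hzero hone
  have hdischarge := card_mul_le_sum_of_discharging 1 (fun j => (colSum f j : ℤ))
    (fun j j' => transfer (colSum f j) (colSum f j')) 2 hcharge
  have hsum : ∑ v, f v = ∑ j, colSum f j := Fintype.sum_prod_type_right f
  rw [Fintype.card_fin] at hdischarge
  rw [hsum, ← Nat.cast_le (α := ℤ)]
  push_cast at hdischarge ⊢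
  linarith

def rowOfTwos : Fin 3 × Fin (n + 3) → ℕ := fun v => if v.1 = 0 then 2 else 0

theorem isRDRD_rowOfTwos : IsRDRD (cardProd (cycleGraph 3) (cycleGraph (n + 3))) rowOfTwos := by
  have hrow {i : Fin 3} {j : Fin (n + 3)} (h : rowOfTwos (i, j) = 0) : i ≠ 0 := by
    rintro rfl
    simp [rowOfTwos] at h
  refine ⟨fun v => ?_, fun ⟨i, j⟩ h => Or.inr ?_, fun v h => ?_, fun ⟨i, j⟩ h => ?_⟩
  · unfold rowOfTwos
    split_ifs <;> omega
  · refine ⟨(0, j - 1), (0, j + 1), by simp [Fin.sub_one_ne_add_one j], ?_, ?_, rfl, rfl⟩ <;>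
      simp [cardProd_cycleGraph_adj, hrow h]
  · unfold rowOfTwos at h
    split_ifs at h
    omega
  · have hi := hrow h
    -- `-i` is the row other than `0` and `i`
    refine ⟨(-i, j + 1), cardProd_cycleGraph_adj.2 ⟨?_, Or.inr rfl⟩, by simp [rowOfTwos, hi]⟩
    revert hi
    fin_cases i <;> decide

theorem sum_rowOfTwos : ∑ v, (rowOfTwos : Fin 3 × Fin (n + 3) → ℕ) v = 2 * (n + 3) := by
  simp [rowOfTwos, Fintype.sum_prod_type, Fin.sum_univ_three, mul_comm]

end Torus

theorem stmt10 (m : ℕ) (hm : 3 ≤ m) :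
    gammaRdR (cardProd (SimpleGraph.cycleGraph 3) (SimpleGraph.cycleGraph m)) = 2 * m := by
  obtain ⟨n, rfl⟩ : ∃ n, m = n + 3 := ⟨m - 3, by omega⟩
  refine le_antisymm (Nat.sInf_le ⟨rowOfTwos, isRDRD_rowOfTwos, sum_rowOfTwos⟩) ?_
  refine le_csInf ⟨_, rowOfTwos, isRDRD_rowOfTwos, sum_rowOfTwos⟩ ?_
  rintro _ ⟨f, hf, rfl⟩
  exact hf.isDoubleRomanDominating.two_mul_le_sum
end

section
/- Let f be any RDRD-function of C_n ⊙ K₁ (n ≥ 3), with V(C_n) = {u₁,…,u_n} and u'_i the pendant neighbor of u_i. Setting f_j = f(u_j) + f(u'_j), we have f_j + f_{j+1} + f_{j+2} ≥ 7 for all j (indices mod n). The same bound holds for P_n ⊙ K₁ for 1 ≤ j ≤ n−2. -/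
/-!
In `G ⊙ K₁` a pendant vertex `u'` has `u` as its only neighbour, so it cannot get weight `0`
(it would need `u` both to be `0`, for restraint, and to dominate it); if it gets `1`, then `u`
gets at least `2`. Hence every pair `{u, u'}` weighs at least `2`, and exactly `2` only as
`f u = 0`, `f u' = 2`. If three consecutive pairs weighed at most `6`, all three would be of this
form, and the middle vertex, whose cycle or path neighbours are the two outer ones, would have
weight `0` but only one neighbour of positive weight, its pendant of weight `2`.
-/

open SimpleGraph Finset

section CoronaK1

variable {α : Type*} {G : SimpleGraph α} {f : α ⊕ α × Fin 1 → ℕ}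

/-- The paper's `f_j`. -/
def pairWeight (f : α ⊕ α × Fin 1 → ℕ) (j : α) : ℕ := f (.inl j) + f (.inr (j, 0))

lemma corona_bot_adj_inr_iff {j : α} {a : Fin 1} {x : α ⊕ α × Fin 1} :
    (corona G (⊥ : SimpleGraph (Fin 1))).Adj (.inr (j, a)) x ↔ x = .inl j := by
  rcases x with u | ⟨v, b⟩ <;> simp [corona]

lemma corona_bot_adj_inl_iff {m : α} {x : α ⊕ α × Fin 1} :
    (corona G (⊥ : SimpleGraph (Fin 1))).Adj (.inl m) x ↔
      (∃ k, x = .inl k ∧ G.Adj m k) ∨ x = .inr (m, 0) := by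
  rcases x with u | ⟨v, b⟩
  · simp [corona]
  · simp [corona, Subsingleton.elim b 0, eq_comm]

namespace IsRDRD

variable (hf : IsRDRD (corona G (⊥ : SimpleGraph (Fin 1))) f)
include hf

lemma pendant_ne_zero (j : α) : f (.inr (j, 0)) ≠ 0 := by
  intro h0
  obtain ⟨u, hu, hu0⟩ := hf.2.2.2 _ h0
  rw [corona_bot_adj_inr_iff] at hu
  subst hu
  rcases hf.2.1 _ h0 with ⟨v, hv, hv3⟩ | ⟨v, w, hvw, hv, hw, -, -⟩
  · rw [corona_bot_adj_inr_iff] at hv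
    subst hv
    omega
  · rw [corona_bot_adj_inr_iff] at hv hw
    exact hvw (hv.trans hw.symm)

lemma two_le_of_pendant_eq_one (j : α) (h1 : f (.inr (j, 0)) = 1) : 2 ≤ f (.inl j) := by
  obtain ⟨u, hu, hu2⟩ := hf.2.2.1 _ h1
  rw [corona_bot_adj_inr_iff] at hu
  exact hu ▸ hu2

lemma two_le_pairWeight (j : α) : 2 ≤ pairWeight f j := by
  have := hf.pendant_ne_zero j
  have := hf.two_le_of_pendant_eq_one j
  unfold pairWeight
  omega

lemma eq_zero_of_pairWeight_le_two (j : α) (h : pairWeight f j ≤ 2) :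
    f (.inl j) = 0 ∧ f (.inr (j, 0)) = 2 := by
  have := hf.pendant_ne_zero j
  have := hf.two_le_of_pendant_eq_one j
  unfold pairWeight at h
  omega

lemma seven_le_pairWeight_of_adj {a m b : α} (hm : ∀ k, G.Adj m k → k = a ∨ k = b) :
    7 ≤ pairWeight f a + pairWeight f m + pairWeight f b := by
  by_contra! hlt
  have haw := hf.two_le_pairWeight a
  have hmw := hf.two_le_pairWeight m
  have hbw := hf.two_le_pairWeight b
  have hzero : ∀ k, G.Adj m k → f (.inl k) = 0 := by
    intro k hk
    rcases hm k hk with rfl | rfl <;> exact (hf.eq_zero_of_pairWeight_le_two k (by omega)).1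
  obtain ⟨hm0, hm2⟩ := hf.eq_zero_of_pairWeight_le_two m (by omega)
  have hpendant : ∀ x, (corona G ⊥).Adj (.inl m) x → 2 ≤ f x → x = .inr (m, 0) := by
    intro x hx hx2
    rcases corona_bot_adj_inl_iff.1 hx with ⟨k, rfl, hk⟩ | rfl
    · have := hzero k hk
      omega
    · rfl
  rcases hf.2.1 _ hm0 with ⟨u, hu, hu3⟩ | ⟨u, w, huw, hu, hw, hu2, hw2⟩
  · obtain rfl := hpendant u hu (by omega)
    omega
  · exact huw ((hpendant u hu (by omega)).trans (hpendant w hw (by omega)).symm)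

end IsRDRD

end CoronaK1

lemma cycleGraph_adj_add_one_imp {n : ℕ} {j k : Fin (n + 2)}
    (h : (cycleGraph (n + 2)).Adj (j + 1) k) : k = j ∨ k = j + 2 := by
  open Fin.CommRing in
  rcases cycleGraph_adj.1 h with h | h
  · exact .inl (by linear_combination -h)
  · exact .inr (by linear_combination h)

lemma pathGraph_adj_imp {n : ℕ} {a b c k : Fin n} (hab : a.val + 1 = b.val)
    (hbc : b.val + 1 = c.val) (h : (pathGraph n).Adj b k) : k = a ∨ k = c := by
  rw [pathGraph_adj] at h
  simp only [Fin.ext_iff]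
  omega

theorem stmt15 (n : ℕ) (hn : 3 ≤ n) :
    (∀ f : Fin n ⊕ Fin n × Fin 1 → ℕ,
      IsRDRD (corona (SimpleGraph.cycleGraph n) (⊥ : SimpleGraph (Fin 1))) f →
      ∀ j : Fin n,
        7 ≤ (f (.inl j) + f (.inr (j, 0))) +
            (f (.inl (j + ⟨1, by omega⟩)) + f (.inr (j + ⟨1, by omega⟩, 0))) +
            (f (.inl (j + ⟨2, by omega⟩)) + f (.inr (j + ⟨2, by omega⟩, 0)))) ∧
    (∀ f : Fin n ⊕ Fin n × Fin 1 → ℕ,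
      IsRDRD (corona (SimpleGraph.pathGraph n) (⊥ : SimpleGraph (Fin 1))) f →
      ∀ j : ℕ, ∀ h : j + 2 < n,
        7 ≤ (f (.inl ⟨j, by omega⟩) + f (.inr (⟨j, by omega⟩, 0))) +
            (f (.inl ⟨j + 1, by omega⟩) + f (.inr (⟨j + 1, by omega⟩, 0))) +
            (f (.inl ⟨j + 2, h⟩) + f (.inr (⟨j + 2, h⟩, 0)))) := by
  obtain ⟨n, rfl⟩ : ∃ m, n = m + 3 := ⟨n - 3, by omega⟩
  refine ⟨fun f hf j => ?_, fun f hf j hj => hf.seven_le_pairWeight_of_adj fun k =>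
    pathGraph_adj_imp rfl rfl⟩
  have h1 : (⟨1, by omega⟩ : Fin (n + 3)) = 1 := Fin.ext (Nat.mod_eq_of_lt (by omega)).symm
  have h2 : (⟨2, by omega⟩ : Fin (n + 3)) = 2 := Fin.ext (Nat.mod_eq_of_lt (by omega)).symm
  rw [h1, h2]
  exact hf.seven_le_pairWeight_of_adj fun k => cycleGraph_adj_add_one_imp
end
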